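/- For m, n ≥ 2, μ(K_m □ K_n) = z(m,n;2,2), where z(m,n;2,2) is the Zarankiewicz number: the maximum number of 1s in an m×n 0-1 matrix containing no 2×2 all-ones submatrix. -/

import Mathlib

open SimpleGraph

/-- Two vertices `u v ∈ X` are `X`-visible in `G`: there is a shortest `u,v`-path
whose only vertices in `X` are `u` and `v`. -/
def VisiblePair {V : Type*} (G : SimpleGraph V) (X : Set V) (u v : V) : Prop :=
  ∃ p : G.Walk u v, p.IsPath ∧ p.length = G.dist u v ∧
    ∀ w ∈ p.support, w ∈ X → w = u ∨ w = v

/-- `X` is a mutual-visibility set of `G`. -/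
def IsMVSet {V : Type*} (G : SimpleGraph V) (X : Set V) : Prop :=
  ∀ u ∈ X, ∀ v ∈ X, u ≠ v → VisiblePair G X u v

/-- `X` is an independent set of `G`. -/
def IsIndep {V : Type*} (G : SimpleGraph V) (X : Set V) : Prop :=
  ∀ u ∈ X, ∀ v ∈ X, ¬ G.Adj u v

/-- The mutual-visibility number `μ(G)`. -/
noncomputable def mu {V : Type*} (G : SimpleGraph V) : ℕ :=
  sSup {n | ∃ X : Set V, IsMVSet G X ∧ X.ncard = n}

/-- The independent mutual-visibility number `μᵢ(G)`. -/
noncomputable def muI {V : Type*} (G : SimpleGraph V) : ℕ :=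
  sSup {n | ∃ X : Set V, IsMVSet G X ∧ IsIndep G X ∧ X.ncard = n}

/-- The independence number `α(G)`. -/
noncomputable def indepNumber {V : Type*} (G : SimpleGraph V) : ℕ :=
  sSup {n | ∃ X : Set V, IsIndep G X ∧ X.ncard = n}

/-- The Zarankiewicz number `z(m,n;2,2)`: the maximum number of 1s in an `m × n`
0-1 matrix with no 2×2 all-ones submatrix. -/
noncomputable def zar (m n : ℕ) : ℕ :=
  sSup {N | ∃ X : Set (Fin m × Fin n),
    (∀ (i j : Fin m) (k l : Fin n), i ≠ j → k ≠ l →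
      ¬((i, k) ∈ X ∧ (i, l) ∈ X ∧ (j, k) ∈ X ∧ (j, l) ∈ X)) ∧ X.ncard = N}

/-!
In the rook's graph `K_m □ K_n` two distinct vertices are adjacent when they share a row or a
column; otherwise they are at distance two, and the only shortest paths between them pass
through one of the two other corners `(u.1, v.2)`, `(v.1, u.2)` of the rectangle they span.
So such a pair in `X` is visible iff one of those corners is missing from `X`, and `X` is a
mutual-visibility set iff it contains no four corners of a rectangle, i.e. iff it is an
`m × n` 0-1 matrix without a 2×2 all-ones submatrix.
-/

namespace SimpleGraph

variable {V : Type*} {G : SimpleGraph V} {X : Set V} {u v : V}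

lemma dist_eq_two_iff_edist_eq_two : G.dist u v = 2 ↔ G.edist u v = 2 := by
  rw [dist, ENat.toNat_eq_iff two_ne_zero]
  rfl

lemma visiblePair_of_adj (h : G.Adj u v) : VisiblePair G X u v :=
  ⟨h.toWalk, by simp [h.ne], by simp [dist_eq_one_iff_adj.mpr h], by simp⟩

lemma visiblePair_iff_of_dist_eq_two (h : G.dist u v = 2) :
    VisiblePair G X u v ↔ ∃ w, G.Adj u w ∧ G.Adj w v ∧ w ∉ X := by
  constructor
  · rintro ⟨p, -, hlen, hX⟩
    rw [h] at hlen
    have huw : G.Adj u (p.getVert 1) := by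
      simpa using p.adj_getVert_succ (i := 0) (by omega)
    have hwv : G.Adj (p.getVert 1) v := by
      have := p.adj_getVert_succ (i := 1) (by omega)
      rwa [show 1 + 1 = p.length by omega, Walk.getVert_length] at this
    refine ⟨p.getVert 1, huw, hwv, fun hw => ?_⟩
    rcases hX _ (p.getVert_mem_support 1) hw with hu | hv
    · exact huw.ne hu.symm
    · exact hwv.ne hv
  · rintro ⟨w, huw, hwv, hw⟩
    have huv : u ≠ v := by
      rintro rfl
      simp at h
    refine ⟨.cons huw (.cons hwv .nil), ?_, by simp [h], ?_⟩
    · simp [Walk.isPath_def, huw.ne, hwv.ne, huv]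
    · simp only [Walk.support_cons, Walk.support_nil, List.mem_cons, List.not_mem_nil,
        or_false]
      rintro x (rfl | rfl | rfl) hx
      exacts [Or.inl rfl, absurd hx hw, Or.inr rfl]

end SimpleGraph

/-- The condition in `zar`, for sets of cells of an arbitrary grid. -/
def IsRectangleFree {α β : Type*} (X : Set (α × β)) : Prop :=
  ∀ (i j : α) (k l : β), i ≠ j → k ≠ l →
    ¬((i, k) ∈ X ∧ (i, l) ∈ X ∧ (j, k) ∈ X ∧ (j, l) ∈ X)

namespace RookGraph

variable {α β : Type*} {u v w : α × β}

local notation "R" => boxProd (⊤ : SimpleGraph α) (⊤ : SimpleGraph β)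

lemma adj_iff : (R).Adj u v ↔ u.1 ≠ v.1 ∧ u.2 = v.2 ∨ u.2 ≠ v.2 ∧ u.1 = v.1 := by
  simp [boxProd_adj]

lemma adj_of_fst_eq (h1 : u.1 = v.1) (huv : u ≠ v) : (R).Adj u v :=
  adj_iff.mpr (.inr ⟨fun h2 => huv (Prod.ext h1 h2), h1⟩)

lemma adj_of_snd_eq (h2 : u.2 = v.2) (huv : u ≠ v) : (R).Adj u v :=
  adj_iff.mpr (.inl ⟨fun h1 => huv (Prod.ext h1 h2), h2⟩)

lemma adj_and_adj_iff (h1 : u.1 ≠ v.1) (h2 : u.2 ≠ v.2) :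
    (R).Adj u w ∧ (R).Adj w v ↔ w = (u.1, v.2) ∨ w = (v.1, u.2) := by
  obtain ⟨a, b⟩ := u
  obtain ⟨c, d⟩ := v
  obtain ⟨x, y⟩ := w
  simp only [adj_iff, Prod.mk.injEq] at h1 h2 ⊢
  grind

lemma dist_eq_two (h1 : u.1 ≠ v.1) (h2 : u.2 ≠ v.2) : (R).dist u v = 2 := by
  rw [dist_eq_two_iff_edist_eq_two, edist_eq_two_iff]
  refine ⟨fun h => h1 (congrArg Prod.fst h), fun h => ?_, (u.1, v.2), ?_⟩
  · rcases adj_iff.mp h with ⟨-, h⟩ | ⟨-, h⟩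
    exacts [h2 h, h1 h]
  · exact (mem_commonNeighbors _).mpr
      (by simpa [adj_comm] using (adj_and_adj_iff h1 h2 (w := (u.1, v.2))).mpr (.inl rfl))

lemma visiblePair_iff (X : Set (α × β)) (h1 : u.1 ≠ v.1) (h2 : u.2 ≠ v.2) :
    VisiblePair R X u v ↔ (u.1, v.2) ∉ X ∨ (v.1, u.2) ∉ X := by
  rw [visiblePair_iff_of_dist_eq_two (dist_eq_two h1 h2)]
  simp only [← and_assoc, adj_and_adj_iff h1 h2, or_and_right, exists_or, exists_eq_left]

theorem isMVSet_iff (X : Set (α × β)) : IsMVSet R X ↔ IsRectangleFree X := by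
  constructor
  · rintro hX i j k l hij hkl ⟨hik, hil, hjk, hjl⟩
    have hvis := hX (i, k) hik (j, l) hjl (fun h => hij (congrArg Prod.fst h))
    rcases (visiblePair_iff X hij hkl).mp hvis with h | h
    exacts [h hil, h hjk]
  · intro hX u hu v hv huv
    by_cases h1 : u.1 = v.1
    · exact visiblePair_of_adj (adj_of_fst_eq h1 huv)
    by_cases h2 : u.2 = v.2
    · exact visiblePair_of_adj (adj_of_snd_eq h2 huv)
    rw [visiblePair_iff X h1 h2, ← not_and_or]
    exact fun ⟨huv', hvu'⟩ => hX u.1 v.1 u.2 v.2 h1 h2 ⟨hu, huv', hvu', hv⟩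

end RookGraph

theorem stmt12_general (m n : ℕ) :
    mu ((⊤ : SimpleGraph (Fin m)).boxProd (⊤ : SimpleGraph (Fin n))) = zar m n := by
  simp only [mu, zar, RookGraph.isMVSet_iff]
  rfl

theorem stmt12 (m n : ℕ) (hm : 2 ≤ m) (hn : 2 ≤ n) :
    mu ((⊤ : SimpleGraph (Fin m)).boxProd (⊤ : SimpleGraph (Fin n))) = zar m n :=
  stmt12_general m n
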